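/- arXiv:2006.06554 — 4 statements merged into one kernel-verified Lean document; each statement's English description precedes it below -/
import Mathlib

section
/- If A and B are two bases of X\X₀ in an exponential vector space X, then A and B have the same cardinality. -/
/-- An exponential vector space (evs) over a field `K`. -/
class EVS (K : Type*) [Field K] (X : Type*) extends PartialOrder X, AddCommMonoid X, SMul K X where
  add_le_add_right' : ∀ {x y : X}, x ≤ y → ∀ z : X, x + z ≤ y + z
  smul_le_smul' : ∀ {x y : X}, x ≤ y → ∀ α : K, α • x ≤ α • y
  smul_add' : ∀ (α : K) (x y : X), α • (x + y) = α • x + α • y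
  mul_smul' : ∀ (α β : K) (x : X), α • (β • x) = (α * β) • x
  add_smul_le' : ∀ (α β : K) (x : X), (α + β) • x ≤ α • x + β • x
  one_smul' : ∀ x : X, (1 : K) • x = x
  smul_eq_zero_iff' : ∀ (α : K) (x : X), α • x = 0 ↔ α = 0 ∨ x = 0
  primitive_iff' : ∀ x : X, x + (-1 : K) • x = 0 ↔ (∀ y : X, y ≤ x → y = x)
  exists_primitive' : ∀ x : X, ∃ p : X, (∀ y : X, y ≤ p → y = p) ∧ p ≤ x

namespace EVS

variable (K : Type*) [Field K]

/-- The primitive space `X₀`: the set of minimal elements of `X`. -/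
def primSpace (X : Type*) [EVS K X] : Set X := {x | ∀ y, y ≤ x → y = x}

/-- The testing set `L(x)`. -/
def L {X : Type*} [EVS K X] (x : X) : Set X :=
  {z | ∃ α : K, α ≠ 0 ∧ ∃ p ∈ primSpace K X, α • x + p ≤ z}

/-- `B` is a generator of `X ∖ X₀`. -/
def Generates {X : Type*} [EVS K X] (B : Set X) : Prop :=
  B ⊆ (primSpace K X)ᶜ ∧ (primSpace K X)ᶜ = ⋃ x ∈ B, L K x

/-- `B` is an orderly independent subset of `X ∖ X₀`. -/
def OrderlyIndep {X : Type*} [EVS K X] (B : Set X) : Prop :=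
  B ⊆ (primSpace K X)ᶜ ∧ ∀ x ∈ B, ∀ y ∈ B, x ≠ y → x ∉ L K y ∧ y ∉ L K x

/-- `B` is a basis of `X ∖ X₀`. -/
def IsBasis {X : Type*} [EVS K X] (B : Set X) : Prop :=
  OrderlyIndep K B ∧ Generates K B

/-- The feasible set `Q(X)`. -/
def Q (X : Type*) [EVS K X] : Set X :=
  {x | x ∉ primSpace K X ∧ ∀ y, y ≤ x → y ∉ primSpace K X → y ∈ L K x}

/-- An order-isomorphism between two evs over a common field `K`. -/
structure IsOrderIso {X Y : Type*} [EVS K X] [EVS K Y] (φ : X → Y) : Prop where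
  bijective : Function.Bijective φ
  map_add : ∀ x y : X, φ (x + y) = φ x + φ y
  map_smul : ∀ (α : K) (x : X), φ (α • x) = α • φ x
  le_iff : ∀ x y : X, x ≤ y ↔ φ x ≤ φ y

end EVS

namespace EVSAux

open EVS

variable {K X : Type*} [Field K] [EVS K X]

lemma smul_zero'' (α : K) : α • (0 : X) = 0 :=
  (EVS.smul_eq_zero_iff' α (0 : X)).mpr (Or.inr rfl)

lemma prim_eq {p : X} (hp : p ∈ primSpace K X) : p + (-1 : K) • p = 0 :=
  (EVS.primitive_iff' p).mpr hp

lemma prim_of_eq {p : X} (h : p + (-1 : K) • p = 0) : p ∈ primSpace K X :=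
  (EVS.primitive_iff' p).mp h

lemma prim_smul {p : X} (hp : p ∈ primSpace K X) (α : K) :
    α • p ∈ primSpace K X := by
  apply prim_of_eq
  have h1 : (-1 : K) • (α • p) = α • ((-1 : K) • p) := by
    rw [EVS.mul_smul', EVS.mul_smul', mul_comm]
  rw [h1, ← EVS.smul_add', prim_eq hp, smul_zero'']

lemma prim_add {p q : X} (hp : p ∈ primSpace K X) (hq : q ∈ primSpace K X) :
    p + q ∈ primSpace K X := by
  apply prim_of_eq
  have h1 : p + q + (-1 : K) • (p + q)
      = (p + (-1 : K) • p) + (q + (-1 : K) • q) := by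
    rw [EVS.smul_add']
    abel
  rw [h1, prim_eq hp, prim_eq hq, add_zero]

lemma L_trans {a b c : X} (hab : a ∈ L K b) (hbc : b ∈ L K c) : a ∈ L K c := by
  obtain ⟨α, hα, p, hp, hle⟩ := hab
  obtain ⟨β, hβ, q, hq, hle'⟩ := hbc
  refine ⟨α * β, mul_ne_zero hα hβ, α • q + p,
    prim_add (prim_smul hq α) hp, ?_⟩
  have h1 : α • (β • c + q) ≤ α • b := EVS.smul_le_smul' hle' α
  have h2 : α • (β • c + q) = (α * β) • c + α • q := by
    rw [EVS.smul_add', EVS.mul_smul']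
  calc (α * β) • c + (α • q + p) = (α • (β • c + q)) + p := by
        rw [h2, add_assoc]
    _ ≤ α • b + p := EVS.add_le_add_right' h1 p
    _ ≤ a := hle

end EVSAux

/-- any two bases of `X ∖ X₀` have the same cardinality. -/
theorem stmt_11 {K X : Type*} [Field K] [EVS K X] (A B : Set X)
    (hA : EVS.IsBasis K A) (hB : EVS.IsBasis K B) :
    Cardinal.mk A = Cardinal.mk B := by
  classical
  have hchoose : ∀ (S T : Set X), EVS.IsBasis K S → EVS.IsBasis K T →
      ∀ a : S, ∃ b : T, (a : X) ∈ EVS.L K (b : X) := by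
    intro S T hS hT a
    have ha : (a : X) ∈ (EVS.primSpace K X)ᶜ := hS.1.1 a.2
    rw [hT.2.2] at ha
    obtain ⟨b, hbT, hb⟩ := Set.mem_iUnion₂.mp ha
    exact ⟨⟨b, hbT⟩, hb⟩
  choose f hf using hchoose A B hA hB
  choose g hg using hchoose B A hB hA
  have key : ∀ (S T : Set X) (hS : EVS.IsBasis K S) (_hT : EVS.IsBasis K T)
      (u : S → T) (v : T → S),
      (∀ a, (a : X) ∈ EVS.L K ((u a : T) : X)) →
      (∀ b, (b : X) ∈ EVS.L K ((v b : S) : X)) →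
      ∀ a, v (u a) = a := by
    intro S T hS _hT u v hu hv a
    have h1 : (a : X) ∈ EVS.L K ((v (u a) : S) : X) :=
      EVSAux.L_trans (hu a) (hv (u a))
    by_contra hne
    have hne' : ((v (u a) : S) : X) ≠ (a : X) := fun h => hne (Subtype.ext h)
    exact (hS.1.2 _ (v (u a)).2 _ a.2 hne').2 h1
  exact Cardinal.mk_congr ⟨f, g, key A B hA hB f g hf hg, key B A hB hA g f hg hf⟩
end

section
/- In an exponential vector space X, if x ∈ Q(X) then L(x)=L(y) for every y ∈ (↓x)\X₀. -/
lemma evs_smul_zero {K X : Type*} [Field K] [EVS K X] (β : K) : β • (0 : X) = 0 :=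
  (EVS.smul_eq_zero_iff' β 0).mpr (Or.inr rfl)

lemma evs_prim_smul {K X : Type*} [Field K] [EVS K X] {p : X}
    (hp : p ∈ EVS.primSpace K X) (β : K) : β • p ∈ EVS.primSpace K X := by
  have h : p + (-1 : K) • p = 0 := (EVS.primitive_iff' p).mpr hp
  apply (EVS.primitive_iff' (β • p)).mp
  calc β • p + (-1 : K) • (β • p)
      = β • p + ((-1) * β) • p := by rw [EVS.mul_smul']
    _ = β • p + (β * (-1)) • p := by ring_nf
    _ = β • p + β • ((-1 : K) • p) := by rw [EVS.mul_smul']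
    _ = β • (p + (-1 : K) • p) := (EVS.smul_add' β p _).symm
    _ = β • (0 : X) := by rw [h]
    _ = 0 := evs_smul_zero β

lemma evs_prim_add {K X : Type*} [Field K] [EVS K X] {p q : X}
    (hp : p ∈ EVS.primSpace K X) (hq : q ∈ EVS.primSpace K X) :
    p + q ∈ EVS.primSpace K X := by
  have h1 : p + (-1 : K) • p = 0 := (EVS.primitive_iff' p).mpr hp
  have h2 : q + (-1 : K) • q = 0 := (EVS.primitive_iff' q).mpr hq
  apply (EVS.primitive_iff' (p + q)).mp
  calc p + q + (-1 : K) • (p + q)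
      = p + q + ((-1 : K) • p + (-1 : K) • q) := by rw [EVS.smul_add']
    _ = (p + (-1 : K) • p) + (q + (-1 : K) • q) := by
        simp only [add_assoc, add_comm, add_left_comm]
    _ = 0 := by rw [h1, h2, add_zero]

/-- if `x ∈ Q(X)` then `L(x) = L(y)` for every `y ∈ (↓x) ∖ X₀`. -/
theorem stmt_13 {K X : Type*} [Field K] [EVS K X] (x : X) (hx : x ∈ EVS.Q K X) :
    ∀ y : X, y ≤ x → y ∉ EVS.primSpace K X → EVS.L K x = EVS.L K y := by
  intro y hyx hy0
  obtain ⟨α, hα, p, hp, hpy⟩ := hx.2 y hyx hy0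
  ext z
  constructor
  · rintro ⟨β, hβ, q, hq, hzq⟩
    refine ⟨β, hβ, q, hq, le_trans ?_ hzq⟩
    exact EVS.add_le_add_right' (EVS.smul_le_smul' hyx β) q
  · rintro ⟨β, hβ, q, hq, hzq⟩
    refine ⟨β * α, mul_ne_zero hβ hα, β • p + q,
      evs_prim_add (evs_prim_smul hp β) hq, ?_⟩
    have h1 : β • (α • x + p) + q ≤ β • y + q :=
      EVS.add_le_add_right' (EVS.smul_le_smul' hpy β) q
    have h2 : (β * α) • x + (β • p + q) = β • (α • x + p) + q := by
      rw [EVS.smul_add' β (α • x) p, EVS.mul_smul', add_assoc]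
    rw [h2]
    exact le_trans h1 hzq
end

section
/- An exponential vector space X admits a basis of X\X₀ if and only if the feasible set Q(X) := {x∈X\X₀ : (↓x)\X₀ ⊆ L(x)} generates X\X₀, i.e., X\X₀ = ⋃_{x∈Q(X)} L(x). -/
/-!
The primitive space `X₀` is closed under sums and scalar multiples, which makes the relation
`z ∈ L y` reflexive and transitive. On `Q(X)` it is also symmetric: if `x ∈ L y`, the lower bound
`α • y + p` of `x` lies outside `X₀`, hence in `L x`, and cancelling the primitive part
(`p + (-1) • p = 0`) yields `y ∈ L x`. When `Q(X)` generates, a set of representatives of the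
classes of this equivalence relation is therefore a basis. Conversely a basis `B` lies in `Q(X)`:
any `y ≤ x ∈ B` outside `X₀` lies in some `L b` with `b ∈ B`, so does `x`, and independence
forces `b = x`.
-/

namespace EVS

variable {K X : Type*} [Field K] [EVS K X]

lemma smul_zero_eq (α : K) : α • (0 : X) = 0 :=
  (smul_eq_zero_iff' α (0 : X)).mpr (Or.inr rfl)

lemma mem_primSpace_iff {x : X} : x ∈ primSpace K X ↔ x + (-1 : K) • x = 0 :=
  (primitive_iff' x).symm

lemma zero_mem_primSpace : (0 : X) ∈ primSpace K X := by
  rw [mem_primSpace_iff, smul_zero_eq, add_zero]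

lemma smul_add_neg_smul {p : X} (hp : p ∈ primSpace K X) (α : K) :
    α • p + (-α) • p = 0 := by
  have h := congrArg (α • ·) (mem_primSpace_iff.mp hp)
  simpa only [smul_add', mul_smul', mul_neg_one, smul_zero_eq] using h

lemma smul_mem_primSpace {p : X} (hp : p ∈ primSpace K X) (α : K) :
    α • p ∈ primSpace K X := by
  rw [mem_primSpace_iff, mul_smul', neg_one_mul, smul_add_neg_smul hp]

lemma add_mem_primSpace {p q : X} (hp : p ∈ primSpace K X) (hq : q ∈ primSpace K X) :
    p + q ∈ primSpace K X := by
  rw [mem_primSpace_iff] at *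
  rw [smul_add', add_add_add_comm, hp, hq, add_zero]

lemma mem_primSpace_of_add_mem {x p : X} (hp : p ∈ primSpace K X)
    (h : x + p ∈ primSpace K X) : x ∈ primSpace K X := by
  rw [mem_primSpace_iff] at *
  rwa [smul_add', add_add_add_comm, hp, add_zero] at h

lemma smul_add_notMem_primSpace {x : X} (hx : x ∉ primSpace K X) {α : K} (hα : α ≠ 0)
    {p : X} (hp : p ∈ primSpace K X) : α • x + p ∉ primSpace K X := fun h => by
  have hαx := smul_mem_primSpace (mem_primSpace_of_add_mem hp h) α⁻¹
  rw [mul_smul', inv_mul_cancel₀ hα, one_smul'] at hαx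
  exact hx hαx

lemma mem_L_self (x : X) : x ∈ L K x :=
  ⟨1, one_ne_zero, 0, zero_mem_primSpace, by rw [one_smul', add_zero]⟩

lemma mem_L_of_le {x z w : X} (hz : z ∈ L K x) (hzw : z ≤ w) : w ∈ L K x := by
  obtain ⟨α, hα, p, hp, hle⟩ := hz
  exact ⟨α, hα, p, hp, hle.trans hzw⟩

lemma mem_L_trans {x y z : X} (hzy : z ∈ L K y) (hyx : y ∈ L K x) : z ∈ L K x := by
  obtain ⟨α, hα, p, hp, hle⟩ := hzy
  obtain ⟨β, hβ, q, hq, hle'⟩ := hyx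
  refine ⟨α * β, mul_ne_zero hα hβ, α • q + p,
    add_mem_primSpace (smul_mem_primSpace hq α) hp, ?_⟩
  calc (α * β) • x + (α • q + p) = α • (β • x + q) + p := by
        rw [smul_add', mul_smul', add_assoc]
    _ ≤ α • y + p := add_le_add_right' (smul_le_smul' hle' α) p
    _ ≤ z := hle

lemma L_subset_compl_primSpace {x : X} (hx : x ∉ primSpace K X) :
    L K x ⊆ (primSpace K X)ᶜ := by
  rintro z ⟨α, hα, p, hp, hle⟩ hz
  exact smul_add_notMem_primSpace hx hα hp (hz _ hle ▸ hz)

lemma mem_L_symm_of_mem_Q {x y : X} (hx : x ∈ Q K X) (hy : y ∈ Q K X) (h : x ∈ L K y) :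
    y ∈ L K x := by
  obtain ⟨α, hα, p, hp, hle⟩ := h
  obtain ⟨β, hβ, q, hq, hle'⟩ := hx.2 _ hle (smul_add_notMem_primSpace hy.1 hα hp)
  refine ⟨α⁻¹ * β, mul_ne_zero (inv_ne_zero hα) hβ, α⁻¹ • q + (-α⁻¹) • p,
    add_mem_primSpace (smul_mem_primSpace hq _) (smul_mem_primSpace hp _), ?_⟩
  calc (α⁻¹ * β) • x + (α⁻¹ • q + (-α⁻¹) • p) = α⁻¹ • (β • x + q) + (-α⁻¹) • p := by
        rw [smul_add', mul_smul', add_assoc]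
    _ ≤ α⁻¹ • (α • y + p) + (-α⁻¹) • p := add_le_add_right' (smul_le_smul' hle' _) _
    _ = y := by
        rw [smul_add', mul_smul', inv_mul_cancel₀ hα, one_smul', add_assoc,
          smul_add_neg_smul hp, add_zero]

lemma Generates.of_forall_mem_L {B C : Set X} (hC : Generates K C)
    (hB : B ⊆ (primSpace K X)ᶜ) (hCB : ∀ c ∈ C, ∃ b ∈ B, c ∈ L K b) : Generates K B := by
  refine ⟨hB, Set.Subset.antisymm (fun z hz => ?_) ?_⟩
  · rw [hC.2] at hz
    obtain ⟨c, hc, hzc⟩ := Set.mem_iUnion₂.mp hz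
    obtain ⟨b, hb, hcb⟩ := hCB c hc
    exact Set.mem_iUnion₂.mpr ⟨b, hb, mem_L_trans hzc hcb⟩
  · exact Set.iUnion₂_subset fun b hb => L_subset_compl_primSpace (hB hb)

lemma IsBasis.subset_Q {B : Set X} (hB : IsBasis K B) : B ⊆ Q K X := by
  refine fun x hx => ⟨hB.1.1 hx, fun y hyx hy => ?_⟩
  rw [← Set.mem_compl_iff, hB.2.2] at hy
  obtain ⟨b, hb, hyb⟩ := Set.mem_iUnion₂.mp hy
  obtain rfl : x = b := by_contra fun hxb => (hB.1.2 x hx b hb hxb).1 (mem_L_of_le hyb hyx)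
  exact hyb

variable (K X) in
def feasibleSetoid : Setoid (Q K X) where
  r x y := (x : X) ∈ L K (y : X)
  iseqv := ⟨fun x => mem_L_self (x : X), fun {x y} => mem_L_symm_of_mem_Q x.2 y.2,
    mem_L_trans⟩

variable (K X) in
def feasibleReps : Set X :=
  Set.range fun c : Quotient (feasibleSetoid K X) => (c.out : X)

lemma feasibleReps_subset_Q : feasibleReps K X ⊆ Q K X := by
  rintro _ ⟨c, rfl⟩
  exact c.out.2

lemma orderlyIndep_feasibleReps : OrderlyIndep K (feasibleReps K X) := by
  refine ⟨fun x hx => (feasibleReps_subset_Q hx).1, ?_⟩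
  rintro _ ⟨c, rfl⟩ _ ⟨d, rfl⟩ hne
  have hcd : c ≠ d := fun h => hne (h ▸ rfl)
  exact ⟨fun h => hcd (Quotient.out_equiv_out.mp h),
    fun h => hcd (Quotient.out_equiv_out.mp h).symm⟩

lemma exists_feasibleRep_mem_L {x : X} (hx : x ∈ Q K X) :
    ∃ b ∈ feasibleReps K X, x ∈ L K b :=
  ⟨_, ⟨Quotient.mk _ ⟨x, hx⟩, rfl⟩, (feasibleSetoid K X).iseqv.symm (Quotient.mk_out _)⟩

end EVS

open EVS in
/-- `X ∖ X₀` has a basis iff the feasible set `Q(X)` generates `X ∖ X₀`. -/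
theorem stmt_15 {K X : Type*} [Field K] [EVS K X] :
    (∃ B : Set X, EVS.IsBasis K B) ↔ EVS.Generates K (EVS.Q K X) := by
  constructor
  · rintro ⟨B, hB⟩
    exact hB.2.of_forall_mem_L (fun x hx => hx.1) fun b hb => ⟨b, hB.subset_Q hb, mem_L_self b⟩
  · intro hQ
    exact ⟨feasibleReps K X, orderlyIndep_feasibleReps,
      hQ.of_forall_mem_L (fun x hx => (feasibleReps_subset_Q hx).1)
        fun _ hx => exists_feasibleRep_mem_L hx⟩
end

section
/- In an exponential vector space X, the feasible set Q(X) is closed under dilation and translation by primitive elements: if x∈Q(X), α is a nonzero scalar, and p∈X₀, then αx+p ∈ Q(X). Moreover Q(X) is downward closed off X₀: if x∈Q(X) then (↓x)\X₀ ⊆ Q(X). -/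
section Aux

variable {K X : Type*} [Field K] [EVS K X]

lemma primMem_iff (p : X) : p ∈ EVS.primSpace K X ↔ p + (-1 : K) • p = 0 :=
  (EVS.primitive_iff' p).symm

lemma evs_smul_zero_s17 (α : K) : α • (0 : X) = 0 :=
  (EVS.smul_eq_zero_iff' α 0).mpr (Or.inr rfl)

lemma evs_inv_smul {α : K} (hα : α ≠ 0) (x : X) : α⁻¹ • (α • x) = x := by
  rw [EVS.mul_smul', inv_mul_cancel₀ hα, EVS.one_smul']

lemma evs_smul_inv {α : K} (hα : α ≠ 0) (x : X) : α • (α⁻¹ • x) = x := by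
  rw [EVS.mul_smul', mul_inv_cancel₀ hα, EVS.one_smul']

lemma smul_mem_prim (α : K) {p : X} (hp : p ∈ EVS.primSpace K X) :
    α • p ∈ EVS.primSpace K X := by
  rw [primMem_iff] at hp ⊢
  have : α • p + (-1 : K) • α • p = α • (p + (-1 : K) • p) := by
    rw [EVS.smul_add', EVS.mul_smul', EVS.mul_smul', mul_comm]
  rw [this, hp, evs_smul_zero_s17]

lemma add_mem_prim {p q : X} (hp : p ∈ EVS.primSpace K X) (hq : q ∈ EVS.primSpace K X) :
    p + q ∈ EVS.primSpace K X := by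
  rw [primMem_iff] at hp hq ⊢
  have : p + q + (-1 : K) • (p + q) = (p + (-1 : K) • p) + (q + (-1 : K) • q) := by
    rw [EVS.smul_add']; abel
  rw [this, hp, hq, add_zero]

lemma mem_prim_of_smul {α : K} (hα : α ≠ 0) {x : X} (h : α • x ∈ EVS.primSpace K X) :
    x ∈ EVS.primSpace K X := by
  have := smul_mem_prim (α⁻¹) h
  rwa [evs_inv_smul hα] at this

end Aux

/-- `Q(X)` is closed under dilation and translation by primitive elements,
and downward closed off `X₀`. -/
theorem stmt_17 {K X : Type*} [Field K] [EVS K X] (x : X) (hx : x ∈ EVS.Q K X) :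
    (∀ (α : K) (p : X), α ≠ 0 → p ∈ EVS.primSpace K X → α • x + p ∈ EVS.Q K X) ∧
    (∀ y : X, y ≤ x → y ∉ EVS.primSpace K X → y ∈ EVS.Q K X) := by
  obtain ⟨hxn, hxL⟩ := hx
  constructor
  · intro α p hα hp
    have hp0 : p + (-1 : K) • p = 0 := (primMem_iff p).mp hp
    constructor
    · -- α • x + p is not primitive
      intro hmin
      apply hxn
      have h : (α • x + p) + (-1 : K) • (α • x + p) = 0 := (primMem_iff _).mp hmin
      have h2 : (α • x + p) + (-1 : K) • (α • x + p)
          = (α • x + (-1 : K) • (α • x)) + (p + (-1 : K) • p) := by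
        rw [EVS.smul_add']; abel
      rw [h2, hp0, add_zero] at h
      exact mem_prim_of_smul hα ((primMem_iff _).mpr h)
    · -- every nonprimitive y ≤ α•x + p lies in L(α•x + p)
      intro y hy hyn
      set w : X := α⁻¹ • (y + (-1 : K) • p) with hw
      have hnp : (-1 : K) • p + p = 0 := by rw [add_comm]; exact hp0
      have hwx : w ≤ x := by
        have h1 : y + (-1 : K) • p ≤ α • x := by
          have := EVS.add_le_add_right' hy ((-1 : K) • p)
          rwa [add_assoc, hp0, add_zero] at this
        have := EVS.smul_le_smul' h1 (α⁻¹)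
        rwa [evs_inv_smul hα] at this
      have hyw : α • w + p = y := by
        rw [hw, evs_smul_inv hα, add_assoc, hnp, add_zero]
      have hwn : w ∉ EVS.primSpace K X := by
        intro hwp
        exact hyn (hyw ▸ add_mem_prim (smul_mem_prim α hwp) hp)
      obtain ⟨β, hβ, q, hq, hle⟩ := hxL w hwx hwn
      refine ⟨β, hβ, α • q + (p + (-1 : K) • (β • p)),
        add_mem_prim (smul_mem_prim α hq)
          (add_mem_prim hp (smul_mem_prim (-1 : K) (smul_mem_prim β hp))), ?_⟩
      have hbp : β • p + (-1 : K) • (β • p) = 0 := (primMem_iff _).mp (smul_mem_prim β hp)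
      have key : β • (α • x + p) + (α • q + (p + (-1 : K) • (β • p)))
          = ((α * β) • x + α • q) + p := by
        have h3 : β • (α • x + p) + (α • q + (p + (-1 : K) • (β • p)))
            = ((β • (α • x) + α • q) + p) + (β • p + (-1 : K) • (β • p)) := by
          rw [EVS.smul_add']; abel
        rw [h3, hbp, add_zero, EVS.mul_smul', mul_comm β α]
      rw [key, ← hyw]
      apply EVS.add_le_add_right'
      have := EVS.smul_le_smul' hle α
      rwa [EVS.smul_add', EVS.mul_smul'] at this
  · intro y hyx hyn
    refine ⟨hyn, ?_⟩
    intro z hz hzn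
    obtain ⟨β, hβ, q, hq, hle⟩ := hxL z (le_trans hz hyx) hzn
    exact ⟨β, hβ, q, hq, le_trans (EVS.add_le_add_right' (EVS.smul_le_smul' hyx β) q) hle⟩
end
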